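/- Let R = k[x_1,…,x_m], f_1,…,f_ℓ ∈ R homogeneous of degree d, and s = (s_1,…,s_ℓ) a homogeneous syzygy of (f_1,…,f_ℓ) with leading term (with respect to a position-over-term module order) equal to τ·e_i for a monomial τ. Then τ·f_i lies in the k-linear span of the set {τ'·f_j : j < i and τ' a monomial of degree deg(τ) + d − deg(f_j)} ∪ {τ'·f_i : τ' a monomial of degree deg(τ) with τ' smaller than τ in the monomial order}. -/

import Mathlib

/-!
Expanding `∑ s_j f_j = 0` over the monomials of the `s_j` gives a `k`-linear relation among
the products `τ' f_j` in which `τ f_i` has a nonzero coefficient. Every other product occurring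
in it has a signature below `(i, τ)`, and since all `s_j` are homogeneous of the same degree,
its multiplier `τ'` has the degree of `τ`.
-/

open MvPolynomial

theorem Submodule.mem_of_sum_smul_eq_zero {K V ι : Type*} [DivisionRing K] [AddCommGroup V]
    [Module K V] {S : Submodule K V} {s : Finset ι} {c : ι → K} {v : ι → V}
    (hsum : ∑ x ∈ s, c x • v x = 0) {x₀ : ι} (hx₀ : x₀ ∈ s) (hc : c x₀ ≠ 0)
    (hS : ∀ x ∈ s, x ≠ x₀ → v x ∈ S) : v x₀ ∈ S := by
  classical
  have hrest : ∑ x ∈ s.erase x₀, c x • v x ∈ S :=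
    S.sum_mem fun x hx =>
      S.smul_mem _ (hS x (Finset.mem_of_mem_erase hx) (Finset.ne_of_mem_erase hx))
  rw [← Finset.add_sum_erase s _ hx₀, add_eq_zero_iff_eq_neg] at hsum
  have hsmul : c x₀ • v x₀ ∈ S := hsum ▸ S.neg_mem hrest
  simpa [smul_smul, inv_mul_cancel₀ hc] using S.smul_mem (c x₀)⁻¹ hsmul

namespace MvPolynomial

variable {σ R : Type*}

theorem mul_eq_sum_coeff_smul_monomial_one_mul [CommSemiring R] (p q : MvPolynomial σ R) :
    p * q = ∑ τ ∈ p.support, coeff τ p • (monomial τ 1 * q) := by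
  conv_lhs => rw [p.as_sum]
  simp only [Finset.sum_mul, ← smul_mul_assoc, smul_monomial, smul_eq_mul, mul_one]

theorem IsHomogeneous.sum_exponents_of_coeff_ne_zero [CommSemiring R] {p : MvPolynomial σ R}
    {n : ℕ} (hp : p.IsHomogeneous n) {τ : σ →₀ ℕ} (hτ : coeff τ p ≠ 0) :
    (τ.sum fun _ e => e) = n := by
  rw [← hp hτ, Finsupp.weight_apply]
  simp

end MvPolynomial

theorem syzygy_criterion_head_general (k : Type*) [Field k] (m ℓ : ℕ)
    (lt : (Fin m →₀ ℕ) → (Fin m →₀ ℕ) → Prop)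
    (f : Fin ℓ → MvPolynomial (Fin m) k)
    (s : Fin ℓ → MvPolynomial (Fin m) k)
    (hsyz : ∑ t, s t * f t = 0)
    (e : ℕ) (hshom : ∀ t, (s t).IsHomogeneous e)
    (i : Fin ℓ) (τ : Fin m →₀ ℕ)
    (hlc : coeff τ (s i) ≠ 0)
    (hlead : ∀ (j : Fin ℓ) (τ' : Fin m →₀ ℕ), coeff τ' (s j) ≠ 0 →
      j < i ∨ (j = i ∧ (τ' = τ ∨ lt τ' τ))) :
    (monomial τ (1 : k)) * f i ∈
      Submodule.span k
        ({p | ∃ (j : Fin ℓ) (τ' : Fin m →₀ ℕ), j < i ∧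
            (τ'.sum fun _ e => e) = (τ.sum fun _ e => e) ∧
            p = (monomial τ' (1 : k)) * f j} ∪
         {p | ∃ τ' : Fin m →₀ ℕ,
            (τ'.sum fun _ e => e) = (τ.sum fun _ e => e) ∧ lt τ' τ ∧
            p = (monomial τ' (1 : k)) * f i}) := by
  classical
  have hrows : ∑ x ∈ Finset.univ.sigma fun t => (s t).support,
      coeff x.2 (s x.1) • (monomial x.2 (1 : k) * f x.1) = 0 := by
    rw [Finset.sum_sigma, ← hsyz]
    refine Finset.sum_congr rfl fun t _ => ?_
    rw [mul_eq_sum_coeff_smul_monomial_one_mul]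
  have hiτ :
      (⟨i, τ⟩ : Σ _ : Fin ℓ, Fin m →₀ ℕ) ∈ Finset.univ.sigma fun t => (s t).support :=
    Finset.mem_sigma.mpr ⟨Finset.mem_univ i, mem_support_iff.mpr hlc⟩
  apply Submodule.mem_of_sum_smul_eq_zero hrows hiτ hlc
  rintro ⟨t, τ'⟩ hx hne
  have hc : coeff τ' (s t) ≠ 0 := mem_support_iff.mp (Finset.mem_sigma.mp hx).2
  have hdeg : (τ'.sum fun _ e => e) = τ.sum fun _ e => e := by
    rw [(hshom t).sum_exponents_of_coeff_ne_zero hc, (hshom i).sum_exponents_of_coeff_ne_zero hlc]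
  apply Submodule.subset_span
  rcases hlead t τ' hc with hti | ⟨rfl, rfl | hτ'⟩
  · exact Or.inl ⟨t, τ', hti, hdeg, rfl⟩
  · exact absurd rfl hne
  · exact Or.inr ⟨τ', hdeg, hτ', rfl⟩

/-- syzygy criterion, part 1: if `s` is a homogeneous syzygy of the homogeneous
degree-`d` polynomials `f₁,…,f_ℓ` whose POT leading term is `τ·eᵢ` (with respect to a monomial
order given by a trichotomous, multiplication-compatible relation `lt` on exponent vectors),
then `τ·fᵢ` lies in the `k`-linear span of the products `τ'·f_j` with `j < i` and `deg τ' = deg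
τ + d - deg f_j = deg τ`, together with the products `τ'·fᵢ` with `deg τ' = deg τ` and
`τ' ≺ τ`. -/
theorem syzygy_criterion_head (k : Type*) [Field k] (m ℓ d : ℕ)
    (lt : (Fin m →₀ ℕ) → (Fin m →₀ ℕ) → Prop)
    (htri : ∀ a b : Fin m →₀ ℕ, a ≠ b → lt a b ∨ lt b a)
    (f : Fin ℓ → MvPolynomial (Fin m) k)
    (hf : ∀ t, (f t).IsHomogeneous d)
    (s : Fin ℓ → MvPolynomial (Fin m) k)
    (hsyz : ∑ t, s t * f t = 0)
    (e : ℕ) (hshom : ∀ t, (s t).IsHomogeneous e)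
    (i : Fin ℓ) (τ : Fin m →₀ ℕ)
    (hlc : coeff τ (s i) ≠ 0)
    (hlead : ∀ (j : Fin ℓ) (τ' : Fin m →₀ ℕ), coeff τ' (s j) ≠ 0 →
      j < i ∨ (j = i ∧ (τ' = τ ∨ lt τ' τ))) :
    (monomial τ (1 : k)) * f i ∈
      Submodule.span k
        ({p | ∃ (j : Fin ℓ) (τ' : Fin m →₀ ℕ), j < i ∧
            (τ'.sum fun _ e => e) = (τ.sum fun _ e => e) ∧
            p = (monomial τ' (1 : k)) * f j} ∪
         {p | ∃ τ' : Fin m →₀ ℕ,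
            (τ'.sum fun _ e => e) = (τ.sum fun _ e => e) ∧ lt τ' τ ∧
            p = (monomial τ' (1 : k)) * f i}) :=
  syzygy_criterion_head_general k m ℓ lt f s hsyz e hshom i τ hlc hlead
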